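/- Let (λ, μ, M, m) be an exact context and define δ: S ⊗_R T → T ⊗_R S by s ⊗ t ↦ 1 ⊗ s' + t' ⊗ 1 where smt = s'm + mt'. Then the binary operation ∘ on T ⊗_R S defined by (t₁ ⊗ s₁) ∘ (t₂ ⊗ s₂) = t₁ · δ(s₁ ⊗ t₂) · s₂ is well-defined, associative, and makes T ⊗_R S into an associative unital ring with identity 1 ⊗ 1. -/

import Mathlib

/-!
Write `x ∈ M` as `u • m + op v • m`; by exactness the pair `(u, v)` is determined up to
`(λ r, -μ r)`, and `t₁ ⊗ λ r s₂ = t₁ μ r ⊗ s₂` makes `t₁ ⊗ u s₂ + t₁ v ⊗ s₂` independent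
of the choice. This expression is additive in each of `t₁, s₁, t₂, s₂` and `R`-balanced in
both pairs, so it descends to a biadditive product on `T ⊗_R S`. Associativity on pure
tensors comes from decomposing `s₁ m t₂ = u₁ m + m v₁`, `s₂ m t₃ = u₂ m + m v₂` and
`u₁ m v₂ = u₃ m + m v₃`: both triple products then equal
`t₁ ⊗ (u₁ u₂ + u₃) s₃ + t₁ v₁ ⊗ u₂ s₃ + t₁ (v₃ + v₁ v₂) ⊗ s₃`.
-/

open MulOpposite
open scoped TensorProduct

universe u

/-- Tensor product over `R` of a right `R`-module and a left `R`-module. -/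
noncomputable abbrev tensorOver (R : Type u) [Ring R] {A B : Type u}
    [AddCommGroup A] [AddCommGroup B]
    (ract : A → R → A) (lact : R → B → B) : Type u :=
  (TensorProduct ℤ A B) ⧸
    AddSubgroup.closure {x : TensorProduct ℤ A B |
      ∃ (a : A) (r : R) (b : B), x = (ract a r) ⊗ₜ[ℤ] b - a ⊗ₜ[ℤ] (lact r b)}

section
variable {R S T : Type u} [Ring R] [Ring S] [Ring T]

/-- `T ⊗_R S`, where `T` is a right `R`-module via `μ` and `S` a left `R`-module via `λ`. -/
noncomputable abbrev TensTS (lam : R →+* S) (mu : R →+* T) : Type u :=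
  tensorOver R (fun (t : T) (r : R) => t * mu r) (fun (r : R) (s : S) => lam r * s)

/-- The elementary tensor `t ⊗ s` in `T ⊗_R S`. -/
noncomputable def eTS (lam : R →+* S) (mu : R →+* T) (t : T) (s : S) : TensTS lam mu :=
  QuotientAddGroup.mk (t ⊗ₜ[ℤ] s)

/-- `(λ, μ, M, m)` is an exact context. -/
def IsExactContext {M : Type u} [AddCommGroup M] [Module S M] [Module Tᵐᵒᵖ M]
    (lam : R →+* S) (mu : R →+* T) (m : M) : Prop :=
  Function.Injective (fun r : R => (lam r, mu r)) ∧
  (∀ (s : S) (t : T), s • m = op t • m ↔ ∃ r : R, lam r = s ∧ mu r = t) ∧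
  (∀ x : M, ∃ (s : S) (t : T), x = s • m - op t • m)

section TensTS
variable (lam : R →+* S) (mu : R →+* T)

theorem eTS_add_left (t t' : T) (s : S) :
    eTS lam mu (t + t') s = eTS lam mu t s + eTS lam mu t' s := by
  simp only [eTS, TensorProduct.add_tmul, QuotientAddGroup.mk_add]

theorem eTS_add_right (t : T) (s s' : S) :
    eTS lam mu t (s + s') = eTS lam mu t s + eTS lam mu t s' := by
  simp only [eTS, TensorProduct.tmul_add, QuotientAddGroup.mk_add]

theorem eTS_zero_left (s : S) : eTS lam mu 0 s = 0 := by
  simp only [eTS, TensorProduct.zero_tmul, QuotientAddGroup.mk_zero]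

theorem eTS_zero_right (t : T) : eTS lam mu t 0 = 0 := by
  simp only [eTS, TensorProduct.tmul_zero, QuotientAddGroup.mk_zero]

theorem eTS_mul_mu (t : T) (r : R) (s : S) :
    eTS lam mu (t * mu r) s = eTS lam mu t (lam r * s) :=
  QuotientAddGroup.eq_iff_sub_mem.mpr (AddSubgroup.subset_closure ⟨t, r, s, rfl⟩)

@[elab_as_elim]
theorem TensTS.induction_on {P : TensTS lam mu → Prop} (x : TensTS lam mu) (zero : P 0)
    (eTS : ∀ t s, P (eTS lam mu t s)) (add : ∀ x y, P x → P y → P (x + y)) : P x := by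
  induction x using QuotientAddGroup.induction_on with
  | H z =>
    induction z using TensorProduct.induction_on with
    | zero => exact zero
    | tmul t s => exact eTS t s
    | add a b ha hb => exact add _ _ ha hb

theorem TensTS.addMonoidHom_ext {A : Type*} [AddCommGroup A] {f g : TensTS lam mu →+ A}
    (h : ∀ t s, f (eTS lam mu t s) = g (eTS lam mu t s)) : f = g := by
  refine AddMonoidHom.ext fun x => ?_
  induction x using TensTS.induction_on lam mu with
  | zero => simp only [map_zero]
  | eTS t s => exact h t s
  | add x y hx hy => simp only [map_add, hx, hy]

noncomputable def TensTS.lift {A : Type*} [AddCommGroup A] (f : T → S → A)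
    (add_left : ∀ t t' s, f (t + t') s = f t s + f t' s)
    (add_right : ∀ t s s', f t (s + s') = f t s + f t s')
    (balanced : ∀ t r s, f (t * mu r) s = f t (lam r * s)) : TensTS lam mu →+ A :=
  QuotientAddGroup.lift _
    (TensorProduct.liftAddHom
      (AddMonoidHom.mk' (fun t => AddMonoidHom.mk' (f t) (add_right t))
        fun t t' => AddMonoidHom.ext (add_left t t'))
      fun n t s => by rw [map_zsmul, AddMonoidHom.smul_apply, ← map_zsmul])
    ((AddSubgroup.closure_le _).mpr <| by
      rintro _ ⟨t, r, s, rfl⟩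
      simp [balanced])

end TensTS

namespace IsExactContext
variable {M : Type u} [AddCommGroup M] [Module S M] [Module Tᵐᵒᵖ M]
  {lam : R →+* S} {mu : R →+* T} {m : M}

theorem exists_decomp (hEC : IsExactContext lam mu m) (x : M) :
    ∃ (u : S) (v : T), x = u • m + op v • m := by
  obtain ⟨s, t, h⟩ := hEC.2.2 x
  exact ⟨s, -t, by rw [h, op_neg, neg_smul, sub_eq_add_neg]⟩

theorem lam_smul (hEC : IsExactContext lam mu m) (r : R) : lam r • m = op (mu r) • m :=
  (hEC.2.1 (lam r) (mu r)).mpr ⟨r, rfl, rfl⟩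

theorem eTS_decomp_congr (hEC : IsExactContext lam mu m) {u u' : S} {v v' : T}
    (h : u • m + op v • m = u' • m + op v' • m) (t : T) (s : S) :
    eTS lam mu t (u * s) + eTS lam mu (t * v) s =
      eTS lam mu t (u' * s) + eTS lam mu (t * v') s := by
  have hdiff : (u' - u) • m = op (v - v') • m := by
    rw [sub_smul, op_sub, sub_smul, sub_eq_sub_iff_add_eq_add]
    exact h.symm.trans (add_comm _ _)
  obtain ⟨r, hu, hv⟩ := (hEC.2.1 _ _).mp hdiff
  rw [eq_sub_iff_add_eq'] at hu hv
  rw [← hu, ← hv, mul_add, add_mul, eTS_add_left, eTS_add_right, eTS_mul_mu]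
  abel

/-- `t₁ · δ(s₁ ⊗ t₂) · s₂`, with `δ` evaluated on a chosen decomposition of `s₁ m t₂`. -/
noncomputable def pureMul (hEC : IsExactContext lam mu m) (t₁ : T) (s₁ : S) (t₂ : T) (s₂ : S) :
    TensTS lam mu :=
  eTS lam mu t₁ ((hEC.exists_decomp (s₁ • op t₂ • m)).choose * s₂) +
    eTS lam mu (t₁ * (hEC.exists_decomp (s₁ • op t₂ • m)).choose_spec.choose) s₂

theorem pureMul_eq (hEC : IsExactContext lam mu m) {t₁ : T} {s₁ : S} {t₂ : T} {s₂ : S}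
    {u : S} {v : T} (h : s₁ • op t₂ • m = u • m + op v • m) :
    hEC.pureMul t₁ s₁ t₂ s₂ = eTS lam mu t₁ (u * s₂) + eTS lam mu (t₁ * v) s₂ :=
  hEC.eTS_decomp_congr ((hEC.exists_decomp _).choose_spec.choose_spec.symm.trans h) t₁ s₂

theorem pureMul_add_outer_left (hEC : IsExactContext lam mu m) (t₁ t₁' : T) (s₁ : S) (t₂ : T)
    (s₂ : S) :
    hEC.pureMul (t₁ + t₁') s₁ t₂ s₂ = hEC.pureMul t₁ s₁ t₂ s₂ + hEC.pureMul t₁' s₁ t₂ s₂ := by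
  obtain ⟨u, v, h⟩ := hEC.exists_decomp (s₁ • op t₂ • m)
  simp only [hEC.pureMul_eq h, add_mul, eTS_add_left]
  abel

theorem pureMul_add_outer_right (hEC : IsExactContext lam mu m) (t₁ : T) (s₁ : S) (t₂ : T)
    (s₂ s₂' : S) :
    hEC.pureMul t₁ s₁ t₂ (s₂ + s₂') = hEC.pureMul t₁ s₁ t₂ s₂ + hEC.pureMul t₁ s₁ t₂ s₂' := by
  obtain ⟨u, v, h⟩ := hEC.exists_decomp (s₁ • op t₂ • m)
  simp only [hEC.pureMul_eq h, mul_add, eTS_add_right]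
  abel

theorem pureMul_add_inner_left (hEC : IsExactContext lam mu m) (t₁ : T) (s₁ s₁' : S) (t₂ : T)
    (s₂ : S) :
    hEC.pureMul t₁ (s₁ + s₁') t₂ s₂ = hEC.pureMul t₁ s₁ t₂ s₂ + hEC.pureMul t₁ s₁' t₂ s₂ := by
  obtain ⟨u, v, h⟩ := hEC.exists_decomp (s₁ • op t₂ • m)
  obtain ⟨u', v', h'⟩ := hEC.exists_decomp (s₁' • op t₂ • m)
  have hsum : (s₁ + s₁') • op t₂ • m = (u + u') • m + op (v + v') • m := by
    rw [add_smul, h, h', add_smul, op_add, add_smul]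
    abel
  simp only [hEC.pureMul_eq h, hEC.pureMul_eq h', hEC.pureMul_eq hsum, add_mul, mul_add,
    eTS_add_left, eTS_add_right]
  abel

theorem pureMul_add_inner_right (hEC : IsExactContext lam mu m) (t₁ : T) (s₁ : S) (t₂ t₂' : T)
    (s₂ : S) :
    hEC.pureMul t₁ s₁ (t₂ + t₂') s₂ = hEC.pureMul t₁ s₁ t₂ s₂ + hEC.pureMul t₁ s₁ t₂' s₂ := by
  obtain ⟨u, v, h⟩ := hEC.exists_decomp (s₁ • op t₂ • m)
  obtain ⟨u', v', h'⟩ := hEC.exists_decomp (s₁ • op t₂' • m)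
  have hsum : s₁ • op (t₂ + t₂') • m = (u + u') • m + op (v + v') • m := by
    rw [op_add, add_smul, smul_add, h, h', add_smul, op_add, add_smul]
    abel
  simp only [hEC.pureMul_eq h, hEC.pureMul_eq h', hEC.pureMul_eq hsum, add_mul, mul_add,
    eTS_add_left, eTS_add_right]
  abel

variable [SMulCommClass S Tᵐᵒᵖ M]

theorem pureMul_balanced_outer (hEC : IsExactContext lam mu m) (t : T) (r : R) (s : S) (t₂ : T)
    (s₂ : S) :
    hEC.pureMul (t * mu r) s t₂ s₂ = hEC.pureMul t (lam r * s) t₂ s₂ := by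
  obtain ⟨u, v, h⟩ := hEC.exists_decomp (s • op t₂ • m)
  have hr : (lam r * s) • op t₂ • m = (lam r * u) • m + op (mu r * v) • m := by
    rw [mul_smul, h, smul_add, ← mul_smul, smul_comm, hEC.lam_smul, ← mul_smul, ← op_mul]
  rw [hEC.pureMul_eq h, hEC.pureMul_eq hr, mul_assoc, mul_assoc, eTS_mul_mu]

theorem pureMul_balanced_inner (hEC : IsExactContext lam mu m) (t₁ : T) (s₁ : S) (t : T) (r : R)
    (s : S) :
    hEC.pureMul t₁ s₁ (t * mu r) s = hEC.pureMul t₁ s₁ t (lam r * s) := by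
  obtain ⟨u, v, h⟩ := hEC.exists_decomp (s₁ • op t • m)
  have hr : s₁ • op (t * mu r) • m = (u * lam r) • m + op (v * mu r) • m := by
    rw [op_mul, mul_smul, smul_comm s₁, h, smul_add, ← smul_comm u, ← hEC.lam_smul, ← mul_smul,
      ← mul_smul, ← op_mul]
  rw [hEC.pureMul_eq h, hEC.pureMul_eq hr, mul_assoc, ← mul_assoc t₁, eTS_mul_mu]

noncomputable def mul (hEC : IsExactContext lam mu m) :
    TensTS lam mu →+ TensTS lam mu →+ TensTS lam mu :=
  TensTS.lift lam mu
    (fun t₁ s₁ => TensTS.lift lam mu (hEC.pureMul t₁ s₁) (hEC.pureMul_add_inner_right t₁ s₁)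
      (hEC.pureMul_add_outer_right t₁ s₁) (hEC.pureMul_balanced_inner t₁ s₁))
    (fun t₁ t₁' s₁ => TensTS.addMonoidHom_ext lam mu fun t₂ s₂ =>
      hEC.pureMul_add_outer_left t₁ t₁' s₁ t₂ s₂)
    (fun t₁ s₁ s₁' => TensTS.addMonoidHom_ext lam mu fun t₂ s₂ =>
      hEC.pureMul_add_inner_left t₁ s₁ s₁' t₂ s₂)
    (fun t r s => TensTS.addMonoidHom_ext lam mu fun t₂ s₂ =>
      hEC.pureMul_balanced_outer t r s t₂ s₂)

theorem mul_eTS_eTS (hEC : IsExactContext lam mu m) {t₁ : T} {s₁ : S} {t₂ : T} {s₂ : S}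
    {u : S} {v : T} (h : s₁ • op t₂ • m = u • m + op v • m) :
    hEC.mul (eTS lam mu t₁ s₁) (eTS lam mu t₂ s₂) =
      eTS lam mu t₁ (u * s₂) + eTS lam mu (t₁ * v) s₂ :=
  hEC.pureMul_eq h

theorem mul_assoc_eTS (hEC : IsExactContext lam mu m) (t₁ : T) (s₁ : S) (t₂ : T) (s₂ : S)
    (t₃ : T) (s₃ : S) :
    hEC.mul (hEC.mul (eTS lam mu t₁ s₁) (eTS lam mu t₂ s₂)) (eTS lam mu t₃ s₃) =
      hEC.mul (eTS lam mu t₁ s₁) (hEC.mul (eTS lam mu t₂ s₂) (eTS lam mu t₃ s₃)) := by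
  obtain ⟨u₁, v₁, h₁⟩ := hEC.exists_decomp (s₁ • op t₂ • m)
  obtain ⟨u₂, v₂, h₂⟩ := hEC.exists_decomp (s₂ • op t₃ • m)
  obtain ⟨u₃, v₃, h₃⟩ := hEC.exists_decomp (u₁ • op v₂ • m)
  have hL : (u₁ * s₂) • op t₃ • m = (u₁ * u₂ + u₃) • m + op v₃ • m := by
    rw [mul_smul, h₂, smul_add, ← mul_smul, h₃, add_smul]
    abel
  have hR : s₁ • op (t₂ * v₂) • m = u₃ • m + op (v₃ + v₁ * v₂) • m := by
    rw [op_mul, mul_smul, smul_comm s₁ (op v₂), h₁, smul_add, ← smul_comm u₁ (op v₂) m, h₃,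
      ← mul_smul, ← op_mul, op_add, add_smul]
    abel
  rw [hEC.mul_eTS_eTS h₁, hEC.mul_eTS_eTS h₂, map_add, map_add, AddMonoidHom.add_apply,
    hEC.mul_eTS_eTS hL, hEC.mul_eTS_eTS h₂, hEC.mul_eTS_eTS h₁, hEC.mul_eTS_eTS hR]
  simp only [eTS_add_left, eTS_add_right, add_mul, mul_add, mul_assoc]
  abel

theorem mul_assoc (hEC : IsExactContext lam mu m) (x y z : TensTS lam mu) :
    hEC.mul (hEC.mul x y) z = hEC.mul x (hEC.mul y z) := by
  induction x using TensTS.induction_on lam mu with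
  | zero => simp only [map_zero, AddMonoidHom.zero_apply]
  | add a b ha hb => simp only [map_add, AddMonoidHom.add_apply, ha, hb]
  | eTS t₁ s₁ =>
    induction y using TensTS.induction_on lam mu with
    | zero => simp only [map_zero, AddMonoidHom.zero_apply]
    | add a b ha hb => simp only [map_add, AddMonoidHom.add_apply, ha, hb]
    | eTS t₂ s₂ =>
      induction z using TensTS.induction_on lam mu with
      | zero => simp only [map_zero]
      | add a b ha hb => simp only [map_add, ha, hb]
      | eTS t₃ s₃ => exact hEC.mul_assoc_eTS t₁ s₁ t₂ s₂ t₃ s₃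

theorem one_mul (hEC : IsExactContext lam mu m) (x : TensTS lam mu) :
    hEC.mul (eTS lam mu 1 1) x = x := by
  refine DFunLike.congr_fun (g := AddMonoidHom.id _)
    (TensTS.addMonoidHom_ext lam mu fun t s => ?_) x
  have h : (1 : S) • op t • m = (0 : S) • m + op t • m := by rw [one_smul, zero_smul, zero_add]
  rw [hEC.mul_eTS_eTS h, zero_mul, eTS_zero_right, zero_add, _root_.one_mul]
  rfl

theorem mul_one (hEC : IsExactContext lam mu m) (x : TensTS lam mu) :
    hEC.mul x (eTS lam mu 1 1) = x := by
  refine DFunLike.congr_fun (f := hEC.mul.flip (eTS lam mu 1 1)) (g := AddMonoidHom.id _)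
    (TensTS.addMonoidHom_ext lam mu fun t s => ?_) x
  have h : s • op (1 : T) • m = s • m + op (0 : T) • m := by
    rw [op_one, one_smul, op_zero, zero_smul, add_zero]
  rw [AddMonoidHom.flip_apply, hEC.mul_eTS_eTS h, mul_zero, eTS_zero_left, add_zero,
    _root_.mul_one]
  rfl

end IsExactContext

/-- For an exact context `(λ, μ, M, m)`, the operation `∘` on
`T ⊗_R S` given by `(t₁ ⊗ s₁) ∘ (t₂ ⊗ s₂) = t₁ · δ(s₁ ⊗ t₂) · s₂`, where
`δ(s ⊗ t) = 1 ⊗ s' + t' ⊗ 1` for any decomposition `s·m·t = s'·m + m·t'`, is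
well defined, biadditive, associative and makes `T ⊗_R S` an associative unital
ring with identity `1 ⊗ 1` (the noncommutative tensor product `T ⊠_R S`). -/
theorem stmt4 {M : Type u} [AddCommGroup M] [Module S M] [Module Tᵐᵒᵖ M]
    [SMulCommClass S Tᵐᵒᵖ M]
    (lam : R →+* S) (mu : R →+* T) (m : M)
    (hEC : IsExactContext lam mu m) :
    ∃ mul : TensTS lam mu → TensTS lam mu → TensTS lam mu,
      (∀ (t₁ : T) (s₁ : S) (t₂ : T) (s₂ : S) (u : S) (v : T),
          s₁ • (op t₂ • m) = u • m + op v • m →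
          mul (eTS lam mu t₁ s₁) (eTS lam mu t₂ s₂) =
            eTS lam mu t₁ (u * s₂) + eTS lam mu (t₁ * v) s₂) ∧
      (∀ x y z : TensTS lam mu, mul (x + y) z = mul x z + mul y z) ∧
      (∀ x y z : TensTS lam mu, mul x (y + z) = mul x y + mul x z) ∧
      (∀ x y z : TensTS lam mu, mul (mul x y) z = mul x (mul y z)) ∧
      (∀ x : TensTS lam mu, mul (eTS lam mu 1 1) x = x) ∧
      (∀ x : TensTS lam mu, mul x (eTS lam mu 1 1) = x) :=
  ⟨fun x y => hEC.mul x y, fun _ _ _ _ _ _ h => hEC.mul_eTS_eTS h,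
    fun x y z => DFunLike.congr_fun (map_add hEC.mul x y) z, fun x => map_add (hEC.mul x),
    hEC.mul_assoc, hEC.one_mul, hEC.mul_one⟩

end
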